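/- If the serialized judgment G | L ⊢ ser(C) ⇒ L'' is derivable for some L'', then necessarily L'' = L (serialization is net-neutral on free locations). -/

import Mathlib

/-- Commands of the command-sequence language. -/
inductive Cmd : Type where
  | alloc : ℕ → Cmd
  | free : ℕ → Cmd
  | conn : ℕ → ℕ → Cmd
  | branch : List Cmd → List Cmd → Cmd
  | loop : List Cmd → Cmd


abbrev Cmds := List Cmd

/-- A path in `G` from `l₁` to `l₂` whose intermediate vertices all lie in `L`. -/
def HasPath (G : SimpleGraph ℕ) (l₁ l₂ : ℕ) (L : Finset ℕ) : Prop :=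
  ∃ p : G.Walk l₁ l₂, ∀ v ∈ p.support, v = l₁ ∨ v = l₂ ∨ v ∈ L

/-- The judgment `G | L ⊢ C ⇒ L'`, parameterized by the path condition `P`. -/
inductive Judg (P : ℕ → ℕ → Finset ℕ → Prop) : Finset ℕ → Cmds → Finset ℕ → Prop where
  | empty (L) : Judg P L [] L
  | alloc {L C L' l} : l ∈ L → Judg P (L.erase l) C L' →
      Judg P L (Cmd.alloc l :: C) L'
  | free {L C L' l} : l ∉ L → Judg P (insert l L) C L' →
      Judg P L (Cmd.free l :: C) L'
  | conn {L C L' l₁ l₂} : P l₁ l₂ L → Judg P L C L' →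
      Judg P L (Cmd.conn l₁ l₂ :: C) L'
  | branch {L C₁ C₂ C L'' L'} : Judg P L C₁ L'' → Judg P L C₂ L'' → Judg P L'' C L' →
      Judg P L (Cmd.branch C₁ C₂ :: C) L'
  | loop {L C₁ C L'} : Judg P L C₁ L → Judg P L C L' →
      Judg P L (Cmd.loop C₁ :: C) L'

mutual
/-- Size of a single command. -/
def csize : Cmd → ℕ
  | .alloc _ => 1
  | .free _ => 1
  | .conn _ _ => 1
  | .branch C₁ C₂ => 1 + size C₁ + size C₂
  | .loop C₁ => 1 + size C₁
/-- Size measure on command sequences. -/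
def size : Cmds → ℕ
  | [] => 0
  | c :: C => csize c + size C
end

theorem size_append_aux (C₁ C₂ : Cmds) : size (C₁ ++ C₂) = size C₁ + size C₂ := by
  induction C₁ with
  | nil => simp [size]
  | cons c C ih => simp [size, ih]; omega

/-- Serialization of command sequences. -/
def ser : Cmds → Cmds
  | [] => []
  | .conn l₁ l₂ :: C => .conn l₁ l₂ :: ser C
  | .alloc l :: C => .alloc l :: (ser C ++ [.free l])
  | .free l :: C => .free l :: (ser C ++ [.alloc l])
  | .branch C₁ C₂ :: C₃ => ser C₁ ++ ser (C₂ ++ C₃)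
  | .loop C₁ :: C₂ => ser (C₁ ++ C₂)
termination_by C => size C
decreasing_by
  all_goals simp [size, csize, size_append_aux]
  all_goals omega

/-! Serialization wraps the serialized continuation of every `alloc l` (resp. `free l`) in the
inverse `free l` (resp. `alloc l`), and turns branches and loops into plain sequences of
serialized pieces. Splitting a run at these seams, every piece is net-neutral by induction along
the recursion of `ser`, and `insert l (L.erase l) = L` for `l ∈ L` (dually for `free`). -/

namespace Judg

variable {P : ℕ → ℕ → Finset ℕ → Prop}

theorem exists_mid_of_append {L L' : Finset ℕ} {A B : Cmds} (h : Judg P L (A ++ B) L') :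
    ∃ M, Judg P L A M ∧ Judg P M B L' := by
  induction A generalizing L with
  | nil => exact ⟨L, empty L, h⟩
  | cons c A ih =>
    cases h with
    | alloc hl h => obtain ⟨M, hA, hB⟩ := ih h; exact ⟨M, alloc hl hA, hB⟩
    | free hl h => obtain ⟨M, hA, hB⟩ := ih h; exact ⟨M, free hl hA, hB⟩
    | conn hp h => obtain ⟨M, hA, hB⟩ := ih h; exact ⟨M, conn hp hA, hB⟩
    | branch h₁ h₂ h => obtain ⟨M, hA, hB⟩ := ih h; exact ⟨M, branch h₁ h₂ hA, hB⟩
    | loop h₁ h => obtain ⟨M, hA, hB⟩ := ih h; exact ⟨M, loop h₁ hA, hB⟩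

theorem eq_erase_of_alloc_singleton {L L' : Finset ℕ} {l : ℕ} (h : Judg P L [.alloc l] L') :
    L' = L.erase l := by
  rcases h with _ | ⟨_, ⟨⟩⟩
  rfl

theorem eq_insert_of_free_singleton {L L' : Finset ℕ} {l : ℕ} (h : Judg P L [.free l] L') :
    L' = insert l L := by
  rcases h with _ | _ | ⟨_, ⟨⟩⟩
  rfl

theorem ser_eq (C : Cmds) {L L' : Finset ℕ} (h : Judg P L (ser C) L') : L' = L := by
  induction C using ser.induct generalizing L L' with
  | case1 => rw [ser] at h; cases h; rfl
  | case2 l₁ l₂ C ih =>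
    rw [ser] at h
    rcases h with _ | _ | _ | ⟨_, h⟩
    exact ih h
  | case3 l C ih =>
    rw [ser] at h
    rcases h with _ | ⟨hl, h⟩
    obtain ⟨M, hC, hfree⟩ := exists_mid_of_append h
    rw [eq_insert_of_free_singleton hfree, ih hC, Finset.insert_erase hl]
  | case4 l C ih =>
    rw [ser] at h
    rcases h with _ | _ | ⟨hl, h⟩
    obtain ⟨M, hC, halloc⟩ := exists_mid_of_append h
    rw [eq_erase_of_alloc_singleton halloc, ih hC, Finset.erase_insert hl]
  | case5 C₁ C₂ C₃ ih₁ ih₂₃ =>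
    rw [ser] at h
    obtain ⟨M, h₁, h₂₃⟩ := exists_mid_of_append h
    rw [ih₂₃ h₂₃, ih₁ h₁]
  | case6 C₁ C₂ ih =>
    rw [ser] at h
    exact ih h

end Judg

/-- serialization is net-neutral on free locations. -/
theorem ser_output_eq (G : SimpleGraph ℕ) (L L'' : Finset ℕ) (C : Cmds)
    (h : Judg (HasPath G) L (ser C) L'') : L'' = L :=
  Judg.ser_eq C h
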